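/- For every ε > 0 there is a constant C > 0 (depending only on A and ε) such that for every squarefree integer N ≥ 1 and every nonzero n ∈ ℤ², the number of quadruples (i,j,k,l) with 1 ≤ i,j,k,l ≤ ord(A,N) satisfying n(A^i − A^j + A^k − A^l) ≡ 0 (mod N) is at most C·|n|₂^{8+ε}·3^{ω(N)}·ord(A,N)². -/

import Mathlib

open Matrix

/-- `matOrd A N` is the order of `A` modulo `N`: the least `k ≥ 1`
with `A^k ≡ I (mod N)`. -/
noncomputable def matOrd (A : Matrix (Fin 2) (Fin 2) ℤ) (N : ℕ) : ℕ :=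
  sInf {k | 0 < k ∧ ∀ i j, (N : ℤ) ∣ (A ^ k - 1) i j}

/-- `nu A N n` is the number of quadruples `(i,j,k,l)` with
`1 ≤ i,j,k,l ≤ ord(A,N)` and `n (A^i - A^j + A^k - A^l) ≡ 0 (mod N)`. -/
noncomputable def nu (A : Matrix (Fin 2) (Fin 2) ℤ) (N : ℕ) (n : Fin 2 → ℤ) : ℕ :=
  {q : ℕ × ℕ × ℕ × ℕ |
    q.1 ∈ Finset.Icc 1 (matOrd A N) ∧ q.2.1 ∈ Finset.Icc 1 (matOrd A N) ∧
    q.2.2.1 ∈ Finset.Icc 1 (matOrd A N) ∧ q.2.2.2 ∈ Finset.Icc 1 (matOrd A N) ∧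
    ∀ m, (N : ℤ) ∣ Matrix.vecMul n (A ^ q.1 - A ^ q.2.1 + A ^ q.2.2.1 - A ^ q.2.2.2) m}.ncard

/-!
Write `T = ord(A, N)`, `D = tr(A)² - 4` and `Q(n) = det(n, nA)`; both are nonzero because `D` is
not a square. Let `p ∣ N` be a prime with `p ∤ D Q(n)` and `λ` a root of `X² - tr(A) X + 1` over
`𝔽̄_p`; as `λ ≠ λ⁻¹`, `λ^k = 1` forces `A^k ≡ 1 (mod p)`. Since `n` and `nA` are independent
mod `p`, a solution of `n(A^i - A^j + A^k - A^l) ≡ 0` gives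
`x - y + z - w = 0 = x⁻¹ - y⁻¹ + z⁻¹ - w⁻¹` for `x = λ^i, y = λ^j, z = λ^k, w = λ^l`, i.e.
`(x - y)(x + z)(z - y) = 0`: modulo `ord(A, p)` the quadruple follows one of three patterns.

Fix a pattern at every such prime (`≤ 3^ω(N)` choices). Then `j` is determined by `i` modulo the
lcm `L₁` of the orders at the primes of the first pattern, `k` by `i, j` modulo the lcm `L₂` at the
others, and `l` by `i, j, k` modulo `L = lcm(L₁, L₂)`, leaving at most `T² (T / L)²` quadruples.
Finally `T ∣ L ∏_{p ∣ D Q(n)} ord(A, p)` and `ord(A, p) ≤ p²`, so `T / L ≤ (D Q(n))² ≪ |n|⁴`.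
-/

/-- `X ^ m ≡ u + v X` modulo `X ^ 2 - t X + 1`, where `(u, v) = powCoeff t m`. -/
def powCoeff (t : ℤ) : ℕ → ℤ × ℤ
  | 0 => (1, 0)
  | m + 1 => (-(powCoeff t m).2, (powCoeff t m).1 + t * (powCoeff t m).2)

theorem pow_eq_powCoeff {R : Type*} [Ring R] {t : ℤ} {r : R} (hr : r ^ 2 = t • r - 1) (m : ℕ) :
    r ^ m = (powCoeff t m).1 • (1 : R) + (powCoeff t m).2 • r := by
  induction m with
  | zero => simp [powCoeff]
  | succ m ih =>
    rw [pow_succ, ih, add_mul, smul_mul_assoc, smul_mul_assoc, one_mul, ← sq, hr]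
    simp only [powCoeff, smul_sub, smul_smul]
    module

open Polynomial in
theorem Matrix.sq_eq_trace_smul_sub_one {R : Type*} [CommRing R] {A : Matrix (Fin 2) (Fin 2) R}
    (hA : A.det = 1) : A ^ 2 = A.trace • A - 1 := by
  nontriviality R
  have := A.aeval_self_charpoly
  rw [charpoly_fin_two, hA] at this
  simp only [map_one, map_add, aeval_sub, map_pow, aeval_X, map_mul, aeval_C,
    ← Algebra.smul_def] at this
  rw [← sub_eq_zero, ← this]
  abel

theorem pow_eq_powCoeff_trace {A : Matrix (Fin 2) (Fin 2) ℤ} (hA : A.det = 1) (m : ℕ) :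
    A ^ m = (powCoeff A.trace m).1 • (1 : Matrix (Fin 2) (Fin 2) ℤ) + (powCoeff A.trace m).2 • A :=
  pow_eq_powCoeff (Matrix.sq_eq_trace_smul_sub_one hA) m

section matOrd

variable {A : Matrix (Fin 2) (Fin 2) ℤ} {N : ℕ}

theorem mapMatrix_pow_eq_one_iff (k : ℕ) :
    (Int.castRingHom (ZMod N)).mapMatrix A ^ k = 1 ↔ ∀ i j, (N : ℤ) ∣ (A ^ k - 1) i j := by
  rw [← map_pow, ← sub_eq_zero, ← map_one (Int.castRingHom (ZMod N)).mapMatrix, ← map_sub,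
    ← Matrix.ext_iff]
  simp only [RingHom.mapMatrix_apply, Matrix.map_apply, Matrix.zero_apply, eq_intCast,
    ZMod.intCast_zmod_eq_zero_iff_dvd]

theorem isOfFinOrder_mapMatrix (hA : A.det = 1) [NeZero N] :
    IsOfFinOrder ((Int.castRingHom (ZMod N)).mapMatrix A) := by
  refine IsUnit.isOfFinOrder ((Matrix.isUnit_iff_isUnit_det _).mpr ?_)
  rw [← RingHom.map_det, hA, map_one]
  exact isUnit_one

theorem matOrd_eq_orderOf (hA : A.det = 1) (hN : N ≠ 0) :
    matOrd A N = orderOf ((Int.castRingHom (ZMod N)).mapMatrix A) := by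
  have : NeZero N := ⟨hN⟩
  have hfin := isOfFinOrder_mapMatrix (N := N) hA
  have hmem : orderOf ((Int.castRingHom (ZMod N)).mapMatrix A) ∈
      {k | 0 < k ∧ ∀ i j, (N : ℤ) ∣ (A ^ k - 1) i j} :=
    ⟨hfin.orderOf_pos, (mapMatrix_pow_eq_one_iff _).mp (pow_orderOf_eq_one _)⟩
  refine le_antisymm (Nat.sInf_le hmem) ?_
  obtain ⟨hpos, hdvd⟩ := Nat.sInf_mem ⟨_, hmem⟩
  exact Nat.le_of_dvd hpos (orderOf_dvd_of_pow_eq_one ((mapMatrix_pow_eq_one_iff _).mpr hdvd))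

theorem matOrd_pos (hA : A.det = 1) (hN : N ≠ 0) : 0 < matOrd A N := by
  have : NeZero N := ⟨hN⟩
  rw [matOrd_eq_orderOf hA hN]
  exact (isOfFinOrder_mapMatrix hA).orderOf_pos

theorem matOrd_dvd_iff (hA : A.det = 1) (hN : N ≠ 0) {k : ℕ} :
    matOrd A N ∣ k ↔ ∀ i j, (N : ℤ) ∣ (A ^ k - 1) i j := by
  rw [matOrd_eq_orderOf hA hN, orderOf_dvd_iff_pow_eq_one, mapMatrix_pow_eq_one_iff]

theorem matOrd_dvd_matOrd (hA : A.det = 1) {M : ℕ} (hMN : M ∣ N) (hN : N ≠ 0) :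
    matOrd A M ∣ matOrd A N := by
  have hM : M ≠ 0 := ne_zero_of_dvd_ne_zero hN hMN
  rw [matOrd_dvd_iff hA hM]
  exact fun i j ↦ (Int.natCast_dvd_natCast.mpr hMN).trans ((matOrd_dvd_iff hA hN).mp dvd_rfl i j)

theorem matOrd_dvd_lcm_primeFactors (hA : A.det = 1) (hN : Squarefree N) :
    matOrd A N ∣ N.primeFactors.lcm (matOrd A) := by
  rw [matOrd_dvd_iff hA hN.ne_zero]
  intro i j
  rw [Int.natCast_dvd]
  nth_rw 1 [← Nat.prod_primeFactors_of_squarefree hN]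
  refine Finset.prod_primes_dvd _ (fun p hp ↦ (Nat.prime_of_mem_primeFactors hp).prime) ?_
  intro p hp
  have hp0 := (Nat.prime_of_mem_primeFactors hp).ne_zero
  exact Int.natCast_dvd.mp ((matOrd_dvd_iff hA hp0).mp (Finset.dvd_lcm hp) i j)

theorem matOrd_le_sq (hA : A.det = 1) (hN : N ≠ 0) : matOrd A N ≤ N ^ 2 := by
  have : NeZero N := ⟨hN⟩
  set B := (Int.castRingHom (ZMod N)).mapMatrix A
  have hB (m : ℕ) :
      B ^ m = ((powCoeff A.trace m).1 : ZMod N) • 1 + ((powCoeff A.trace m).2 : ZMod N) • B := by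
    rw [← map_pow, pow_eq_powCoeff_trace hA m, map_add, map_zsmul, map_zsmul, map_one,
      Int.cast_smul_eq_zsmul, Int.cast_smul_eq_zsmul]
  have hinj : Function.Injective fun m : Fin (matOrd A N) ↦
      (((powCoeff A.trace m).1 : ZMod N), ((powCoeff A.trace m).2 : ZMod N)) := by
    intro m m' h
    simp only [Prod.mk.injEq] at h
    have hpow : B ^ (m : ℕ) = B ^ (m' : ℕ) := by rw [hB, hB, h.1, h.2]
    rw [(isOfFinOrder_mapMatrix hA).pow_eq_pow_iff_modEq, ← matOrd_eq_orderOf hA hN] at hpow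
    exact Fin.ext (hpow.eq_of_lt_of_lt m.2 m'.2)
  simpa [sq] using Fintype.card_le_of_injective _ hinj

end matOrd

def qform (A : Matrix (Fin 2) (Fin 2) ℤ) (n : Fin 2 → ℤ) : ℤ :=
  n 0 * (n ᵥ* A) 1 - n 1 * (n ᵥ* A) 0

theorem qform_eq (A : Matrix (Fin 2) (Fin 2) ℤ) (n : Fin 2 → ℤ) :
    qform A n = A 0 1 * n 0 ^ 2 + (A 1 1 - A 0 0) * (n 0 * n 1) - A 1 0 * n 1 ^ 2 := by
  simp only [qform, vecMul, dotProduct, Fin.sum_univ_two]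
  ring

section qform

variable {A : Matrix (Fin 2) (Fin 2) ℤ}

theorem not_isSquare_discr (hA : A.det = 1) (htr : 2 < |A.trace|) : ¬ IsSquare A.discr := by
  rintro ⟨e, he⟩
  rw [Matrix.discr_fin_two, hA] at he
  have ht := sq_abs A.trace
  have he' := sq_abs e
  have : 0 ≤ |e| := abs_nonneg e
  rcases le_or_gt |A.trace| |e| with h | h <;> nlinarith

theorem apply_zero_one_ne_zero_of_not_isSquare_discr (hD : ¬ IsSquare A.discr) : A 0 1 ≠ 0 := by
  refine fun hb ↦ hD ⟨A 0 0 - A 1 1, ?_⟩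
  rw [Matrix.discr_fin_two, Matrix.det_fin_two, Matrix.trace_fin_two, hb]
  ring

theorem qform_ne_zero (hD : ¬ IsSquare A.discr) {n : Fin 2 → ℤ} (hn : n ≠ 0) : qform A n ≠ 0 := by
  intro hQ
  set s := 2 * A 0 1 * n 0 + (A 1 1 - A 0 0) * n 1
  have key : A.discr * n 1 ^ 2 = s ^ 2 := by
    rw [qform_eq] at hQ
    rw [Matrix.discr_fin_two, Matrix.det_fin_two, Matrix.trace_fin_two]
    linear_combination (-4 * A 0 1) * hQ
  rcases eq_or_ne (n 1) 0 with h1 | h1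
  · have h0 : n 0 = 0 := by
      have : 2 * A 0 1 * n 0 = 0 := by simpa [s, h1] using key.symm
      simpa [apply_zero_one_ne_zero_of_not_isSquare_discr hD] using this
    exact hn (funext fun i ↦ by fin_cases i <;> assumption)
  · obtain ⟨r, hr⟩ : n 1 ∣ s :=
      (Int.pow_dvd_pow_iff two_ne_zero).mp ⟨_, key.symm.trans (mul_comm _ _)⟩
    refine hD ⟨r, mul_right_cancel₀ (pow_ne_zero 2 h1) ?_⟩
    rw [key, hr]
    ring

theorem abs_qform_le (n : Fin 2 → ℤ) :
    |qform A n| ≤ (|A 0 1| + |A 1 1 - A 0 0| + |A 1 0|) * (n 0 ^ 2 + n 1 ^ 2) := by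
  have h01 : |n 0 * n 1| ≤ n 0 ^ 2 + n 1 ^ 2 := by
    rw [abs_mul]
    nlinarith [sq_abs (n 0), sq_abs (n 1), sq_nonneg (|n 0| - |n 1|)]
  calc |qform A n|
      ≤ |A 0 1 * n 0 ^ 2| + |(A 1 1 - A 0 0) * (n 0 * n 1)| + |A 1 0 * n 1 ^ 2| := by
        rw [qform_eq]
        exact (abs_sub _ _).trans (add_le_add (abs_add_le _ _) le_rfl)
    _ = |A 0 1| * n 0 ^ 2 + |A 1 1 - A 0 0| * |n 0 * n 1| + |A 1 0| * n 1 ^ 2 := by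
        simp only [abs_mul, abs_pow, sq_abs]
    _ ≤ |A 0 1| * (n 0 ^ 2 + n 1 ^ 2) + |A 1 1 - A 0 0| * (n 0 ^ 2 + n 1 ^ 2) +
          |A 1 0| * (n 0 ^ 2 + n 1 ^ 2) := by
        gcongr
        · exact le_add_of_nonneg_right (sq_nonneg _)
        · exact le_add_of_nonneg_left (sq_nonneg _)
    _ = _ := by ring

end qform

theorem Prime.dvd_of_dvd_smul_add_smul {R : Type*} [CommRing R] {π : R} (hπ : Prime π)
    {x y : Fin 2 → R} (hxy : ¬ π ∣ x 0 * y 1 - x 1 * y 0) {a b : R}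
    (h : ∀ m, π ∣ (a • x + b • y) m) : π ∣ a ∧ π ∣ b := by
  have h0 := h 0
  have h1 := h 1
  simp only [Pi.add_apply, Pi.smul_apply, smul_eq_mul] at h0 h1
  have ha : π ∣ a * (x 0 * y 1 - x 1 * y 0) := by
    convert dvd_sub (h0.mul_right (y 1)) (h1.mul_right (y 0)) using 1; ring
  have hb : π ∣ b * (x 0 * y 1 - x 1 * y 0) := by
    convert dvd_sub (h1.mul_right (x 0)) (h0.mul_right (x 1)) using 1; ring
  exact ⟨(hπ.dvd_or_dvd ha).resolve_right hxy, (hπ.dvd_or_dvd hb).resolve_right hxy⟩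

theorem eq_and_eq_or_of_sub_add_sub {F : Type*} [Field F] {x y z w : F} (hx : x ≠ 0) (hy : y ≠ 0)
    (hz : z ≠ 0) (hw : w ≠ 0) (h : x - y + z - w = 0) (h' : x⁻¹ - y⁻¹ + z⁻¹ - w⁻¹ = 0) :
    (x = y ∧ z = w) ∨ (x = w ∧ y = z) ∨ (x = -z ∧ y = -w) := by
  have hw' : w = x - y + z := by linear_combination -h
  subst hw'
  field_simp at h'
  have : (y - x) * (x + z) * (z - y) = 0 := by linear_combination h'
  rcases mul_eq_zero.mp this with h | h
  · rcases mul_eq_zero.mp h with h | h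
    · exact .inl ⟨by linear_combination -h, by linear_combination h⟩
    · exact .inr (.inr ⟨by linear_combination h, by linear_combination h⟩)
  · exact .inr (.inl ⟨by linear_combination -h, by linear_combination -h⟩)

theorem exists_pow_eq_neg_one {F : Type*} [Field F] {x : F} (hx : x ≠ 0) {i k : ℕ}
    (h : x ^ i = -x ^ k) : ∃ e, x ^ e = -1 := by
  rcases le_total k i with hki | hik
  · refine ⟨i - k, mul_left_cancel₀ (pow_ne_zero k hx) ?_⟩
    rw [← pow_add, Nat.add_sub_cancel' hki, h]
    ring
  · refine ⟨k - i, mul_left_cancel₀ (pow_ne_zero i hx) ?_⟩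
    rw [← pow_add, Nat.add_sub_cancel' hik]
    linear_combination h

theorem Nat.ModEq.of_pow_eq_pow {M : Type*} [Monoid M] {x : M} (hx : IsUnit x) {T : ℕ}
    (hT : ∀ k, x ^ k = 1 → T ∣ k) {i j : ℕ} (h : x ^ i = x ^ j) : i ≡ j [MOD T] := by
  obtain ⟨u, rfl⟩ := hx
  have hu : u ^ i = u ^ j := Units.ext (by simpa using h)
  refine (pow_eq_pow_iff_modEq.mp hu).of_dvd (hT _ ?_)
  rw [← Units.val_pow_eq_pow_val, pow_orderOf_eq_one, Units.val_one]

/-- The three shapes of a solution modulo a good prime. In the last one `h` is an exponent with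
`r ^ h = -1` for the root `r` of `exists_shift_forall_quadPattern`. -/
def QuadPattern (T h : ℕ) (q : ℕ × ℕ × ℕ × ℕ) : Fin 3 → Prop
  | 0 => q.1 ≡ q.2.1 [MOD T] ∧ q.2.2.1 ≡ q.2.2.2 [MOD T]
  | 1 => q.1 ≡ q.2.2.2 [MOD T] ∧ q.2.1 ≡ q.2.2.1 [MOD T]
  | 2 => q.1 ≡ q.2.2.1 + h [MOD T] ∧ q.2.1 ≡ q.2.2.2 + h [MOD T]

theorem exists_shift_forall_quadPattern {F : Type*} [Field F] {r : F} (hr : r ≠ 0) {T : ℕ}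
    (hT : ∀ k, r ^ k = 1 → T ∣ k) :
    ∃ h, ∀ q : ℕ × ℕ × ℕ × ℕ, r ^ q.1 - r ^ q.2.1 + r ^ q.2.2.1 - r ^ q.2.2.2 = 0 →
      r⁻¹ ^ q.1 - r⁻¹ ^ q.2.1 + r⁻¹ ^ q.2.2.1 - r⁻¹ ^ q.2.2.2 = 0 → ∃ c, QuadPattern T h q c := by
  classical
  refine ⟨if he : ∃ e, r ^ e = -1 then he.choose else 0, ?_⟩
  rintro ⟨i, j, k, l⟩ h₁ h₂
  have hmod {a b : ℕ} : r ^ a = r ^ b → a ≡ b [MOD T] := Nat.ModEq.of_pow_eq_pow hr.isUnit hT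
  simp only [inv_pow] at h₂
  rcases eq_and_eq_or_of_sub_add_sub (pow_ne_zero i hr) (pow_ne_zero j hr) (pow_ne_zero k hr)
    (pow_ne_zero l hr) h₁ h₂ with ⟨hij, hkl⟩ | ⟨hil, hjk⟩ | ⟨hik, hjl⟩
  · exact ⟨0, hmod hij, hmod hkl⟩
  · exact ⟨1, hmod hil, hmod hjk⟩
  · have he : ∃ e, r ^ e = -1 := exists_pow_eq_neg_one hr hik
    refine ⟨2, hmod ?_, hmod ?_⟩ <;> rw [dif_pos he, pow_add, he.choose_spec]
    · linear_combination hik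
    · linear_combination hjl

section GoodPrime

variable {A : Matrix (Fin 2) (Fin 2) ℤ} {p : ℕ} {F : Type*} [Field F] [CharP F p] {r : F}

theorem dvd_of_dvd_vecMul_smul_one_add_smul (hp : p.Prime) {n : Fin 2 → ℤ}
    (hQ : ¬ (p : ℤ) ∣ qform A n) {u v : ℤ} (h : ∀ m, (p : ℤ) ∣ (n ᵥ* (u • 1 + v • A)) m) :
    (p : ℤ) ∣ u ∧ (p : ℤ) ∣ v :=
  (Nat.prime_iff_prime_int.mp hp).dvd_of_dvd_smul_add_smul hQ
    (by simpa only [Matrix.vecMul_add, Matrix.vecMul_smul, Matrix.vecMul_one] using h)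

theorem pow_sub_pow_add_pow_sub_pow_eq_zero (hA : A.det = 1) (hp : p.Prime) {n : Fin 2 → ℤ}
    (hQ : ¬ (p : ℤ) ∣ qform A n) (hr : r ^ 2 = A.trace * r - 1) {i j k l : ℕ}
    (h : ∀ m, (p : ℤ) ∣ (n ᵥ* (A ^ i - A ^ j + A ^ k - A ^ l)) m) :
    r ^ i - r ^ j + r ^ k - r ^ l = 0 := by
  set c := powCoeff A.trace
  have hM : A ^ i - A ^ j + A ^ k - A ^ l = ((c i).1 - (c j).1 + (c k).1 - (c l).1) • 1 +
      ((c i).2 - (c j).2 + (c k).2 - (c l).2) • A := by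
    simp only [pow_eq_powCoeff_trace hA]
    module
  obtain ⟨hu, hv⟩ := dvd_of_dvd_vecMul_smul_one_add_smul hp hQ (hM ▸ h)
  have hu' := (CharP.intCast_eq_zero_iff F p _).mpr hu
  have hv' := (CharP.intCast_eq_zero_iff F p _).mpr hv
  have hr' : r ^ 2 = A.trace • r - 1 := by rw [zsmul_eq_mul]; exact hr
  simp only [pow_eq_powCoeff hr', zsmul_eq_mul, mul_one]
  push_cast at hu' hv'
  linear_combination hu' + r * hv'

theorem matOrd_dvd_of_pow_eq_one (hA : A.det = 1) (hp : p.Prime) (hD : ¬ (p : ℤ) ∣ A.discr)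
    (hr : r ^ 2 = A.trace * r - 1) {k : ℕ} (hk : r ^ k = 1) : matOrd A p ∣ k := by
  set s : F := A.trace - r
  have hrs : r * s = 1 := by linear_combination -hr
  have hs : s ^ 2 = A.trace • s - 1 := by rw [zsmul_eq_mul]; linear_combination hr
  have hr' : r ^ 2 = A.trace • r - 1 := by rw [zsmul_eq_mul]; exact hr
  have hne : r - s ≠ 0 := by
    intro hrs'
    apply hD
    rw [← CharP.intCast_eq_zero_iff F p, Matrix.discr_fin_two, hA]
    push_cast
    linear_combination (2 * r - A.trace) * hrs' - 4 * hr
  have hsk : s ^ k = 1 := by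
    have : (r * s) ^ k = 1 := by rw [hrs, one_pow]
    rwa [mul_pow, hk, one_mul] at this
  -- `r ^ k = u + v r` and `s ^ k = u + v s` are both `1` and `r ≠ s`, so `u ≡ 1` and `v ≡ 0`.
  set c := powCoeff A.trace k
  have hrk := pow_eq_powCoeff hr' k
  have hsk' := pow_eq_powCoeff hs k
  rw [hk, zsmul_eq_mul, zsmul_eq_mul, mul_one] at hrk
  rw [hsk, zsmul_eq_mul, zsmul_eq_mul, mul_one] at hsk'
  have hv : ((c.2 : ℤ) : F) = 0 :=
    (mul_eq_zero.mp (by linear_combination hsk' - hrk : (c.2 : F) * (r - s) = 0)).resolve_right hne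
  have hu : ((c.1 - 1 : ℤ) : F) = 0 := by push_cast; linear_combination -hrk - r * hv
  rw [CharP.intCast_eq_zero_iff F p] at hu hv
  rw [matOrd_dvd_iff hA hp.ne_zero]
  intro i j
  have hAk : A ^ k - 1 = (c.1 - 1) • 1 + c.2 • A := by rw [pow_eq_powCoeff_trace hA]; module
  rw [hAk]
  simp only [Matrix.add_apply, Matrix.smul_apply, smul_eq_mul]
  exact dvd_add (hu.mul_right _) (hv.mul_right _)

end GoodPrime

open Polynomial in
theorem exists_shift_quadPattern {A : Matrix (Fin 2) (Fin 2) ℤ} (hA : A.det = 1) {p : ℕ}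
    (hp : p.Prime) (hD : ¬ (p : ℤ) ∣ A.discr) {n : Fin 2 → ℤ} (hQ : ¬ (p : ℤ) ∣ qform A n) :
    ∃ h, ∀ q : ℕ × ℕ × ℕ × ℕ,
      (∀ m, (p : ℤ) ∣ (n ᵥ* (A ^ q.1 - A ^ q.2.1 + A ^ q.2.2.1 - A ^ q.2.2.2)) m) →
        ∃ c, QuadPattern (matOrd A p) h q c := by
  have : Fact p.Prime := ⟨hp⟩
  let F := AlgebraicClosure (ZMod p)
  have hdeg : (X ^ 2 - C (A.trace : F) * X + 1).degree = 2 := by compute_degree!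
  obtain ⟨r, hr⟩ := IsAlgClosed.exists_root _ (hdeg ▸ two_ne_zero)
  have hr : r ^ 2 = A.trace * r - 1 := by
    simp only [IsRoot, eval_add, eval_sub, eval_mul, eval_pow, eval_X, eval_C, eval_one] at hr
    linear_combination hr
  have hr0 : r ≠ 0 := by rintro rfl; simp at hr
  have hrinv : r⁻¹ ^ 2 = A.trace * r⁻¹ - 1 := by
    rw [inv_eq_of_mul_eq_one_right (by linear_combination -hr : r * (A.trace - r) = 1)]
    linear_combination hr
  obtain ⟨h, hh⟩ := exists_shift_forall_quadPattern hr0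
    fun k hk ↦ matOrd_dvd_of_pow_eq_one hA hp hD hr hk
  exact ⟨h, fun q hq ↦ hh q (pow_sub_pow_add_pow_sub_pow_eq_zero hA hp hQ hr hq)
    (pow_sub_pow_add_pow_sub_pow_eq_zero hA hp hQ hrinv hq)⟩

section Counting

theorem Nat.ModEq.finset_lcm {ι : Type*} {s : Finset ι} {f : ι → ℕ} {a b : ℕ}
    (h : ∀ i ∈ s, a ≡ b [MOD f i]) : a ≡ b [MOD s.lcm f] := by
  rw [Nat.modEq_iff_dvd, Int.natCast_dvd]
  exact Finset.lcm_dvd fun i hi ↦ Int.natCast_dvd.mp (Nat.modEq_iff_dvd.mp (h i hi))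

theorem Nat.eq_of_modEq_of_pred_div_eq {L x y : ℕ} (hx : 1 ≤ x) (hy : 1 ≤ y) (h : x ≡ y [MOD L])
    (h' : (x - 1) / L = (y - 1) / L) : x = y := by
  have hmod : (x - 1) % L = (y - 1) % L :=
    Nat.ModEq.add_right_cancel' 1 (by rwa [Nat.sub_add_cancel hx, Nat.sub_add_cancel hy])
  have hx' := Nat.div_add_mod (x - 1) L
  have hy' := Nat.div_add_mod (y - 1) L
  rw [h', hmod] at hx'
  omega

theorem Nat.pred_div_lt_div {L T x : ℕ} (hx : x ∈ Finset.Icc 1 T) (hL : L ∣ T) :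
    (x - 1) / L < T / L := by
  rw [Finset.mem_Icc] at hx
  have hL0 : 0 < L := Nat.pos_of_dvd_of_pos hL (by omega)
  rw [Nat.div_lt_iff_lt_mul hL0, Nat.div_mul_cancel hL]
  omega

theorem Nat.div_mul_div_le_mul_div {T L L₁ L₂ : ℕ} (h₁ : L₁ ∣ T) (h₂ : L₂ ∣ T) (h : L ∣ T)
    (hL : L ∣ L₁ * L₂) : T / L₁ * (T / L₂) ≤ T * (T / L) := by
  rcases Nat.eq_zero_or_pos T with rfl | hT
  · simp
  have h₁₂ : 0 < L₁ * L₂ := Nat.mul_pos (Nat.pos_of_dvd_of_pos h₁ hT) (Nat.pos_of_dvd_of_pos h₂ hT)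
  rw [Nat.div_mul_div_comm h₁ h₂, ← Nat.mul_div_assoc _ h]
  exact Nat.div_le_div_left (Nat.le_of_dvd h₁₂ hL) (Nat.pos_of_dvd_of_pos hL h₁₂)

def quadBox (T : ℕ) : Finset (ℕ × ℕ × ℕ × ℕ) :=
  Finset.Icc 1 T ×ˢ Finset.Icc 1 T ×ˢ Finset.Icc 1 T ×ˢ Finset.Icc 1 T

theorem card_le_of_modEq {T L₁ L₂ L₃ : ℕ} (h₁ : L₁ ∣ T) (h₂ : L₂ ∣ T) (h₃ : L₃ ∣ T)
    {S : Finset (ℕ × ℕ × ℕ × ℕ)} (hS : S ⊆ quadBox T)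
    (hj : ∀ q ∈ S, ∀ q' ∈ S, q.1 = q'.1 → q.2.1 ≡ q'.2.1 [MOD L₁])
    (hk : ∀ q ∈ S, ∀ q' ∈ S, q.1 = q'.1 → q.2.1 = q'.2.1 → q.2.2.1 ≡ q'.2.2.1 [MOD L₂])
    (hl : ∀ q ∈ S, ∀ q' ∈ S, q.1 = q'.1 → q.2.1 = q'.2.1 → q.2.2.1 = q'.2.2.1 →
      q.2.2.2 ≡ q'.2.2.2 [MOD L₃]) :
    S.card ≤ T * (T / L₁ * (T / L₂ * (T / L₃))) := by
  have hbox : ∀ q ∈ S, q.1 ∈ Finset.Icc 1 T ∧ q.2.1 ∈ Finset.Icc 1 T ∧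
      q.2.2.1 ∈ Finset.Icc 1 T ∧ q.2.2.2 ∈ Finset.Icc 1 T := fun q hq ↦ by
    simpa only [quadBox, Finset.mem_product] using hS hq
  -- Each coordinate of `q ∈ S` is pinned down modulo `Lᵢ` by the preceding ones.
  let f (q : ℕ × ℕ × ℕ × ℕ) := (q.1, (q.2.1 - 1) / L₁, (q.2.2.1 - 1) / L₂, (q.2.2.2 - 1) / L₃)
  refine (Finset.card_le_card_of_injOn (t := Finset.Icc 1 T ×ˢ Finset.range (T / L₁) ×ˢ
    Finset.range (T / L₂) ×ˢ Finset.range (T / L₃)) f (fun q hq ↦ ?_)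
    fun q hq q' hq' hqq' ↦ ?_).trans (by simp)
  · obtain ⟨hi, hj, hk, hl⟩ := hbox q hq
    simp only [Finset.coe_product, Set.mem_prod, Finset.mem_coe, Finset.mem_range]
    exact ⟨hi, Nat.pred_div_lt_div hj h₁, Nat.pred_div_lt_div hk h₂, Nat.pred_div_lt_div hl h₃⟩
  · simp only [f, Prod.mk.injEq] at hqq'
    obtain ⟨e₁, e₂, e₃, e₄⟩ := hqq'
    obtain ⟨-, hj₁, hk₁, hl₁⟩ := hbox q hq
    obtain ⟨-, hj₂, hk₂, hl₂⟩ := hbox q' hq'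
    rw [Finset.mem_Icc] at hj₁ hk₁ hl₁ hj₂ hk₂ hl₂
    have e₂ := Nat.eq_of_modEq_of_pred_div_eq hj₁.1 hj₂.1 (hj q hq q' hq' e₁) e₂
    have e₃ := Nat.eq_of_modEq_of_pred_div_eq hk₁.1 hk₂.1 (hk q hq q' hq' e₁ e₂) e₃
    have e₄ := Nat.eq_of_modEq_of_pred_div_eq hl₁.1 hl₂.1 (hl q hq q' hq' e₁ e₂ e₃) e₄
    exact Prod.ext e₁ (Prod.ext e₂ (Prod.ext e₃ e₄))

section QuadPattern

variable {T h : ℕ} {q q' : ℕ × ℕ × ℕ × ℕ}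

theorem QuadPattern.modEq_second (hq : QuadPattern T h q 0) (hq' : QuadPattern T h q' 0)
    (e₁ : q.1 = q'.1) : q.2.1 ≡ q'.2.1 [MOD T] :=
  hq.1.symm.trans (e₁ ▸ hq'.1)

theorem QuadPattern.modEq_third {c : Fin 3} (hc : c ≠ 0) (hq : QuadPattern T h q c)
    (hq' : QuadPattern T h q' c) (e₁ : q.1 = q'.1) (e₂ : q.2.1 = q'.2.1) :
    q.2.2.1 ≡ q'.2.2.1 [MOD T] := by
  fin_cases c
  · exact absurd rfl hc
  · exact hq.2.symm.trans (e₂ ▸ hq'.2)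
  · exact Nat.ModEq.add_right_cancel' h (hq.1.symm.trans (e₁ ▸ hq'.1))

theorem QuadPattern.modEq_fourth {c : Fin 3} (hq : QuadPattern T h q c) (hq' : QuadPattern T h q' c)
    (e₁ : q.1 = q'.1) (e₂ : q.2.1 = q'.2.1) (e₃ : q.2.2.1 = q'.2.2.1) :
    q.2.2.2 ≡ q'.2.2.2 [MOD T] := by
  fin_cases c
  · exact hq.2.symm.trans (e₃ ▸ hq'.2)
  · exact hq.1.symm.trans (e₁ ▸ hq'.1)
  · exact Nat.ModEq.add_right_cancel' h (hq.2.symm.trans (e₂ ▸ hq'.2))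

end QuadPattern

variable {ι : Type*} (s : Finset ι) (Tp h : ι → ℕ) {T : ℕ}

theorem card_le_of_forall_quadPattern (hTp : ∀ p ∈ s, Tp p ∣ T) (c : ι → Fin 3)
    {S : Finset (ℕ × ℕ × ℕ × ℕ)} (hS : S ⊆ quadBox T)
    (hpat : ∀ q ∈ S, ∀ p ∈ s, QuadPattern (Tp p) (h p) q (c p)) :
    S.card ≤ T ^ 2 * (T / s.lcm Tp) ^ 2 := by
  classical
  set L₁ := (s.filter (c · = 0)).lcm Tp
  set L₂ := (s.filter (c · ≠ 0)).lcm Tp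
  set L := s.lcm Tp
  have hdvd {t : Finset ι} (ht : t ⊆ s) : t.lcm Tp ∣ T := Finset.lcm_dvd fun p hp ↦ hTp p (ht hp)
  have hL : L ∣ L₁ * L₂ := by
    refine Finset.lcm_dvd fun p hp ↦ ?_
    by_cases hc : c p = 0
    · exact (Finset.dvd_lcm (Finset.mem_filter.mpr ⟨hp, hc⟩)).mul_right _
    · exact (Finset.dvd_lcm (Finset.mem_filter.mpr ⟨hp, hc⟩)).mul_left _
  have hL₁ : L₁ ∣ T := hdvd (Finset.filter_subset _ s)
  have hL₂ : L₂ ∣ T := hdvd (Finset.filter_subset _ s)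
  refine (card_le_of_modEq hL₁ hL₂ (hdvd subset_rfl) hS ?_ ?_ ?_).trans ?_
  · refine fun q hq q' hq' e₁ ↦ Nat.ModEq.finset_lcm fun p hp ↦ ?_
    obtain ⟨hp, hc⟩ := Finset.mem_filter.mp hp
    exact (hc ▸ hpat q hq p hp).modEq_second (hc ▸ hpat q' hq' p hp) e₁
  · refine fun q hq q' hq' e₁ e₂ ↦ Nat.ModEq.finset_lcm fun p hp ↦ ?_
    obtain ⟨hp, hc⟩ := Finset.mem_filter.mp hp
    exact QuadPattern.modEq_third hc (hpat q hq p hp) (hpat q' hq' p hp) e₁ e₂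
  · exact fun q hq q' hq' e₁ e₂ e₃ ↦ Nat.ModEq.finset_lcm fun p hp ↦
      (hpat q hq p hp).modEq_fourth (hpat q' hq' p hp) e₁ e₂ e₃
  · calc T * (T / L₁ * (T / L₂ * (T / L))) = T * (T / L₁ * (T / L₂)) * (T / L) := by ring
      _ ≤ T * (T * (T / L)) * (T / L) := Nat.mul_le_mul_right _ <| Nat.mul_le_mul_left _ <|
        Nat.div_mul_div_le_mul_div hL₁ hL₂ (hdvd subset_rfl) hL
      _ = T ^ 2 * (T / L) ^ 2 := by ring

theorem card_le_of_quadPattern (hTp : ∀ p ∈ s, Tp p ∣ T) {S : Finset (ℕ × ℕ × ℕ × ℕ)}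
    (hS : S ⊆ quadBox T) (hpat : ∀ q ∈ S, ∀ p ∈ s, ∃ c, QuadPattern (Tp p) (h p) q c) :
    S.card ≤ 3 ^ s.card * (T ^ 2 * (T / s.lcm Tp) ^ 2) := by
  classical
  choose! c hc using hpat
  calc S.card ≤ T ^ 2 * (T / s.lcm Tp) ^ 2 * (S.image fun q ↦ s.restrict (c q)).card := by
        refine Finset.card_le_mul_card_image _ _ fun g hg ↦ ?_
        obtain ⟨q₀, -, rfl⟩ := Finset.mem_image.mp hg
        refine card_le_of_forall_quadPattern s Tp h hTp (c q₀)
          ((Finset.filter_subset _ _).trans hS) fun q hq p hp ↦ ?_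
        obtain ⟨hq, hcq⟩ := Finset.mem_filter.mp hq
        have hcp : c q p = c q₀ p := congrFun hcq ⟨p, hp⟩
        exact hcp ▸ hc q hq p hp
    _ ≤ T ^ 2 * (T / s.lcm Tp) ^ 2 * 3 ^ s.card := by
        gcongr
        exact (Finset.card_le_univ _).trans (by simp)
    _ = _ := by ring

end Counting

section Main

variable {A : Matrix (Fin 2) (Fin 2) ℤ}

theorem matOrd_le_lcm_mul_sq (hA : A.det = 1) {N : ℕ} (hN : Squarefree N) {m : ℤ} (hm : m ≠ 0) :
    matOrd A N ≤
      (N.primeFactors.filter fun p : ℕ ↦ ¬ (p : ℤ) ∣ m).lcm (matOrd A) * m.natAbs ^ 2 := by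
  classical
  set bad := N.primeFactors.filter fun p : ℕ ↦ (p : ℤ) ∣ m
  have hprime {p : ℕ} (hp : p ∈ N.primeFactors) : p.Prime := Nat.prime_of_mem_primeFactors hp
  have hbad : ∏ p ∈ bad, matOrd A p ≤ m.natAbs ^ 2 := calc
    ∏ p ∈ bad, matOrd A p ≤ ∏ p ∈ bad, p ^ 2 := Finset.prod_le_prod' fun p hp ↦
        matOrd_le_sq hA (hprime (Finset.mem_filter.mp hp).1).ne_zero
    _ = (∏ p ∈ bad, p) ^ 2 := Finset.prod_pow _ _ _
    _ ≤ m.natAbs ^ 2 := by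
        refine Nat.pow_le_pow_left (Nat.le_of_dvd (Int.natAbs_pos.mpr hm) ?_) 2
        exact Finset.prod_primes_dvd _ (fun p hp ↦ (hprime (Finset.mem_filter.mp hp).1).prime)
          fun p hp ↦ Int.natCast_dvd.mp (Finset.mem_filter.mp hp).2
  have hpos {s : Finset ℕ} (hs : s ⊆ N.primeFactors) : 0 < s.lcm (matOrd A) :=
    Nat.pos_of_ne_zero <| Finset.lcm_ne_zero_iff.mpr fun p hp ↦
      (matOrd_pos hA (hprime (hs hp)).ne_zero).ne'
  refine (Nat.le_of_dvd (Nat.mul_pos (hpos (Finset.filter_subset _ _)) ?_) ?_).trans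
    (Nat.mul_le_mul_left _ hbad)
  · exact Finset.prod_pos fun p hp ↦ matOrd_pos hA (hprime (Finset.mem_filter.mp hp).1).ne_zero
  refine (matOrd_dvd_lcm_primeFactors hA hN).trans (Finset.lcm_dvd fun p hp ↦ ?_)
  by_cases hpm : (p : ℤ) ∣ m
  · exact (Finset.dvd_prod_of_mem _ (Finset.mem_filter.mpr ⟨hp, hpm⟩)).mul_left _
  · exact (Finset.dvd_lcm (Finset.mem_filter.mpr ⟨hp, hpm⟩)).mul_right _

theorem nu_eq_card (N : ℕ) (n : Fin 2 → ℤ) :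
    nu A N n = ((quadBox (matOrd A N)).filter fun q ↦
      ∀ m, (N : ℤ) ∣ (n ᵥ* (A ^ q.1 - A ^ q.2.1 + A ^ q.2.2.1 - A ^ q.2.2.2)) m).card := by
  rw [nu, ← Set.ncard_coe_finset]
  congr 1
  ext q
  simp [quadBox, and_assoc]

theorem nu_le (hA : A.det = 1) (htr : 2 < |A.trace|) {N : ℕ} (hN : Squarefree N)
    {n : Fin 2 → ℤ} (hn : n ≠ 0) :
    nu A N n ≤ 3 ^ N.primeFactors.card * (matOrd A N ^ 2 * (A.discr * qform A n).natAbs ^ 4) := by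
  classical
  have hD := not_isSquare_discr hA htr
  set m := A.discr * qform A n
  have hm : m ≠ 0 := mul_ne_zero (fun h ↦ hD (h ▸ IsSquare.zero)) (qform_ne_zero hD hn)
  set good := N.primeFactors.filter fun p : ℕ ↦ ¬ (p : ℤ) ∣ m
  have hshift : ∀ p ∈ good, ∃ h, ∀ q : ℕ × ℕ × ℕ × ℕ,
      (∀ i, (p : ℤ) ∣ (n ᵥ* (A ^ q.1 - A ^ q.2.1 + A ^ q.2.2.1 - A ^ q.2.2.2)) i) →
        ∃ c, QuadPattern (matOrd A p) h q c := fun p hp ↦ by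
    obtain ⟨hpN, hpm⟩ := Finset.mem_filter.mp hp
    exact exists_shift_quadPattern hA (Nat.prime_of_mem_primeFactors hpN)
      (fun hpD ↦ hpm (hpD.mul_right _)) (fun hpQ ↦ hpm (hpQ.mul_left _))
  choose! h hh using hshift
  have hpN {p : ℕ} (hp : p ∈ good) : p ∣ N :=
    Nat.dvd_of_mem_primeFactors (Finset.mem_filter.mp hp).1
  rw [nu_eq_card]
  refine (card_le_of_quadPattern good (matOrd A) h ?_ (Finset.filter_subset _ _) ?_).trans
    (Nat.mul_le_mul (Nat.pow_le_pow_right three_pos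
      (Finset.card_le_card (Finset.filter_subset _ _))) (Nat.mul_le_mul_left _ ?_))
  · exact fun p hp ↦ matOrd_dvd_matOrd hA (hpN hp) hN.ne_zero
  · exact fun q hq p hp ↦ hh p hp q fun i ↦
      (Int.natCast_dvd_natCast.mpr (hpN hp)).trans ((Finset.mem_filter.mp hq).2 i)
  calc (matOrd A N / good.lcm (matOrd A)) ^ 2 ≤ (m.natAbs ^ 2) ^ 2 :=
        Nat.pow_le_pow_left (Nat.div_le_of_le_mul (matOrd_le_lcm_mul_sq hA hN hm)) 2
    _ = m.natAbs ^ 4 := by ring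

theorem one_le_sq_add_sq {n : Fin 2 → ℤ} (hn : n ≠ 0) : 1 ≤ n 0 ^ 2 + n 1 ^ 2 := by
  have : n 0 ≠ 0 ∨ n 1 ≠ 0 := by
    by_contra! h
    exact hn (funext fun i ↦ by fin_cases i <;> simp [h.1, h.2])
  rcases this with h | h <;> nlinarith [sq_pos_of_ne_zero h, sq_nonneg (n 0), sq_nonneg (n 1)]

theorem Real.pow_four_le_sqrt_rpow {x ε : ℝ} (hx : 1 ≤ x) (hε : 0 ≤ ε) :
    x ^ 4 ≤ √x ^ ((8 : ℝ) + ε) := calc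
  x ^ 4 = √x ^ ((8 : ℕ) : ℝ) := by
    rw [Real.rpow_natCast, show 8 = 2 * 4 by rfl, pow_mul, Real.sq_sqrt (by linarith)]
  _ ≤ √x ^ ((8 : ℝ) + ε) :=
    Real.rpow_le_rpow_of_exponent_le (Real.one_le_sqrt.mpr hx) (by push_cast; linarith)

end Main

/-- Counting lemma for squarefree moduli: for every `ε > 0` there is `C > 0`
such that for all squarefree `N ≥ 1` and all nonzero `n ∈ ℤ²`, the number of
solutions of `n(A^i - A^j + A^k - A^l) ≡ 0 (mod N)`, `1 ≤ i,j,k,l ≤ ord(A,N)`,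
is at most `C |n|₂^{8+ε} 3^{ω(N)} ord(A,N)²`. -/
theorem count_squarefree
    (A : Matrix (Fin 2) (Fin 2) ℤ) (hA : A.det = 1) (htr : 2 < |A.trace|) :
    ∀ ε : ℝ, 0 < ε → ∃ C : ℝ, 0 < C ∧
      ∀ N : ℕ, 1 ≤ N → Squarefree N → ∀ n : Fin 2 → ℤ, n ≠ 0 →
        (nu A N n : ℝ) ≤ C * Real.sqrt ((n 0 : ℝ) ^ 2 + (n 1 : ℝ) ^ 2) ^ ((8 : ℝ) + ε) *
          3 ^ N.primeFactors.card * (matOrd A N : ℝ) ^ 2 := by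
  intro ε hε
  set K := |A.discr| * (|A 0 1| + |A 1 1 - A 0 0| + |A 1 0|)
  refine ⟨(K : ℝ) ^ 4 + 1, by positivity, fun N _ hN n hn ↦ ?_⟩
  rw [show (n 0 : ℝ) ^ 2 + (n 1 : ℝ) ^ 2 = ((n 0 ^ 2 + n 1 ^ 2 : ℤ) : ℝ) by push_cast; rfl]
  set w := n 0 ^ 2 + n 1 ^ 2
  have hm : ((A.discr * qform A n).natAbs : ℝ) ≤ K * w := by
    rw [Nat.cast_natAbs, ← Int.cast_mul, Int.cast_le, abs_mul, mul_assoc]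
    exact mul_le_mul_of_nonneg_left (abs_qform_le n) (abs_nonneg _)
  have hw : (1 : ℝ) ≤ w := by exact_mod_cast one_le_sq_add_sq hn
  calc (nu A N n : ℝ)
      ≤ 3 ^ N.primeFactors.card * ((matOrd A N : ℝ) ^ 2 * (A.discr * qform A n).natAbs ^ 4) := by
        exact_mod_cast nu_le hA htr hN hn
    _ ≤ 3 ^ N.primeFactors.card * ((matOrd A N : ℝ) ^ 2 * (K * w) ^ 4) := by gcongr
    _ = (K : ℝ) ^ 4 * (w : ℝ) ^ 4 * 3 ^ N.primeFactors.card * (matOrd A N : ℝ) ^ 2 := by ring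
    _ ≤ _ := by
        gcongr
        · linarith
        · exact Real.pow_four_le_sqrt_rpow hw hε.le
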